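/- Let a_1,...,a_{m-1} be positive integers with sum S, and let c = λ(S−1) − μ with 3 ≤ λ ≤ S and 0 ≤ μ ≤ S − λ, with cS even. Then the 2-colouring Δ of {0,1,...,λ+μ−2} with Δ(x) = 0 for x ∈ [0, λ−2] and Δ(x) = 1 for x ∈ [λ−1, λ+μ−2] admits no monochromatic solution to a_1 x_1 + ... + a_{m-1} x_{m-1} − x_m = c − (S−1). Consequently Rad_2(a_1,...,a_{m-1},−1; c) ≥ λ + μ. -/
import Mathlib


/-- `χ` admits a monochromatic solution of `a₁x₁ + ⋯ + a_{m-1}x_{m-1} - x_m = c`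
with all variables in `{1,…,N}`. -/
def MonoSoln {k : ℕ} (a : Fin k → ℕ) (c : ℤ) (r : ℕ) (N : ℕ) (χ : ℤ → Fin r) : Prop :=
  ∃ (x : Fin k → ℤ) (y : ℤ),
    (∀ i, x i ∈ Finset.Icc (1 : ℤ) N) ∧ y ∈ Finset.Icc (1 : ℤ) N ∧
    ((∑ i, (a i : ℤ) * x i) - y = c) ∧ (∀ i, χ (x i) = χ y)

/-- `R` is the `r`-colour Rado number of `a₁x₁ + ⋯ + a_{m-1}x_{m-1} - x_m = c`. -/
def IsRado {k : ℕ} (a : Fin k → ℕ) (c : ℤ) (r : ℕ) (R : ℕ) : Prop :=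
  IsLeast {N : ℕ | ∀ χ : ℤ → Fin r, MonoSoln a c r N χ} R

/-- The lower-bound colouring: `0` on `[0, λ-2]` and `1` on `[λ-1, λ+μ-2]`. -/
def Δ₁₃ (lam : ℤ) : ℤ → Fin 2 := fun x => if 0 ≤ x ∧ x ≤ lam - 2 then 0 else 1

theorem rado_lower_lambda_mu (k : ℕ) (hk : 0 < k) (a : Fin k → ℕ) (hpos : ∀ i, 0 < a i)
    (S : ℕ) (hS : S = ∑ i, a i) (lam mu c : ℤ)
    (hlam1 : 3 ≤ lam) (hlam2 : lam ≤ (S : ℤ)) (hmu1 : 0 ≤ mu) (hmu2 : mu ≤ (S : ℤ) - lam)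
    (hc : c = lam * ((S : ℤ) - 1) - mu) (he : Even (c * S)) :
    (¬ ∃ (x : Fin k → ℤ) (y : ℤ),
        (∀ i, x i ∈ Finset.Icc (0 : ℤ) (lam + mu - 2)) ∧
        y ∈ Finset.Icc (0 : ℤ) (lam + mu - 2) ∧
        ((∑ i, (a i : ℤ) * x i) - y = c - ((S : ℤ) - 1)) ∧
        (∀ i, Δ₁₃ lam (x i) = Δ₁₃ lam y)) ∧
    (∀ R : ℕ, IsRado a c 2 R → lam + mu ≤ (R : ℤ)) := by
  have key : (¬ ∃ (x : Fin k → ℤ) (y : ℤ),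
        (∀ i, x i ∈ Finset.Icc (0 : ℤ) (lam + mu - 2)) ∧
        y ∈ Finset.Icc (0 : ℤ) (lam + mu - 2) ∧
        ((∑ i, (a i : ℤ) * x i) - y = c - ((S : ℤ) - 1)) ∧
        (∀ i, Δ₁₃ lam (x i) = Δ₁₃ lam y)) := by
    rintro ⟨x, y, hx, hy, heq, hmono⟩
    simp only [Finset.mem_Icc] at hx hy
    by_cases hyc : y ≤ lam - 2
    · -- colour 0
      have hy0 : Δ₁₃ lam y = 0 := by simp [Δ₁₃, hy.1, hyc]
      have hxle : ∀ i, x i ≤ lam - 2 := by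
        intro i
        by_contra h
        have h1 : Δ₁₃ lam (x i) = 1 := by
          simp only [Δ₁₃]; rw [if_neg]; rintro ⟨_, h2⟩; exact h h2
        have := hmono i
        rw [h1, hy0] at this
        exact one_ne_zero this
      have hsum : ∑ i, (a i : ℤ) * x i ≤ (S : ℤ) * (lam - 2) := by
        rw [hS]; push_cast
        rw [Finset.sum_mul]
        refine Finset.sum_le_sum fun i _ => ?_
        have hai : (0:ℤ) ≤ (a i : ℤ) := by positivity
        exact mul_le_mul_of_nonneg_left (hxle i) hai
      have hy0' : (0:ℤ) ≤ y := hy.1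
      rw [hc] at heq
      nlinarith
    · -- colour 1
      have hy1 : Δ₁₃ lam y = 1 := by
        simp only [Δ₁₃]; rw [if_neg]; rintro ⟨_, h2⟩; exact hyc h2
      have hxge : ∀ i, lam - 1 ≤ x i := by
        intro i
        by_contra h
        push_neg at h
        have h0 : Δ₁₃ lam (x i) = 0 := by
          simp only [Δ₁₃]; rw [if_pos ⟨(hx i).1, by omega⟩]
        have := hmono i
        rw [h0, hy1] at this
        exact zero_ne_one this
      have hsum : (S : ℤ) * (lam - 1) ≤ ∑ i, (a i : ℤ) * x i := by
        rw [hS]; push_cast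
        rw [Finset.sum_mul]
        refine Finset.sum_le_sum fun i _ => ?_
        have hai : (0:ℤ) ≤ (a i : ℤ) := by positivity
        have := hxge i
        nlinarith
      have hy2 : y ≤ lam + mu - 2 := hy.2
      rw [hc] at heq
      nlinarith
  refine ⟨key, ?_⟩
  intro R hR
  by_contra h
  push_neg at h
  obtain ⟨x, y, hx, hy, heq, hmono⟩ := hR.1 (fun z => Δ₁₃ lam (z - 1))
  simp only [Finset.mem_Icc] at hx hy
  apply key
  refine ⟨fun i => x i - 1, y - 1, ?_, ?_, ?_, fun i => hmono i⟩
  · intro i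
    simp only [Finset.mem_Icc]
    have h1 := (hx i).1
    have h2 := (hx i).2
    omega
  · simp only [Finset.mem_Icc]; omega
  · have : ∑ i, (a i : ℤ) * (x i - 1) = (∑ i, (a i : ℤ) * x i) - (S : ℤ) := by
      rw [hS]; push_cast
      rw [← Finset.sum_sub_distrib]
      apply Finset.sum_congr rfl
      intro i _
      ring
    rw [this]
    linarith
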